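/- arXiv:1901.03402 — 5 statements merged into one kernel-verified Lean document; each statement's English description precedes it below -/
import Mathlib

section
/- (Kerzman–Stein identity.) Let H be a complex Hilbert space, M ⊆ H a closed subspace, S the orthogonal projection of H onto M, and C : H → H a bounded linear operator with C ∘ C = C and range(C) = M. Set A = C* − C. Then S ∘ (I − A) = C; consequently I − A is invertible with bounded inverse and S = C ∘ (I − A)⁻¹. -/
/-!
Both `C` and the orthogonal projection `S` are idempotents with range `M`, so `S C = C` and
`C S = S`; the adjoint of the latter is `S C* = S`, whence `S (I - C* + C) = S - S + C = C`.
The operator `A = C* - C` is skew-adjoint, so `i A` is self-adjoint and has real spectrum;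
thus `i ∉ σ(i A)`, i.e. `i I - i A = i (I - A)` is invertible.
-/

open Complex

theorem ContinuousLinearMap.IsIdempotentElem.mul_eq_right_of_range_le {R E : Type*} [Ring R]
    [TopologicalSpace E] [AddCommGroup E] [Module R E] {p q : E →L[R] E}
    (hp : IsIdempotentElem p) (hqp : q.range ≤ p.range) : p * q = q :=
  ContinuousLinearMap.coe_injective <| (LinearMap.IsIdempotentElem.comp_eq_right_iff
    (ContinuousLinearMap.IsIdempotentElem.toLinearMap hp) _).mpr hqp

theorem IsSelfAdjoint.mul_one_sub_star_sub_self {R : Type*} [Ring R] [StarRing R] {S C : R}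
    (hS : IsSelfAdjoint S) (hSC : S * C = C) (hCS : C * S = S) : S * (1 - (star C - C)) = C := by
  have hSCstar : S * star C = S := by
    simpa only [star_mul, hS.star_eq] using congrArg star hCS
  rw [mul_sub, mul_sub, mul_one, hSCstar, hSC, sub_sub_cancel]

theorem isUnit_one_sub_of_mem_skewAdjoint {A : Type*} [CStarAlgebra A] {a : A}
    (ha : a ∈ skewAdjoint A) : IsUnit (1 - a) := by
  have hIa : IsSelfAdjoint (I • a) :=
    isSelfAdjoint_smul_of_mem_skewAdjoint I_mem_skewAdjoint ha
  have hI : I ∉ spectrum ℂ (I • a) := fun h ↦ by simpa using hIa.im_eq_zero_of_mem_spectrum h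
  rw [← isUnit_smul_iff (Units.mk0 I I_ne_zero)]
  simpa [Units.smul_def, Algebra.algebraMap_eq_smul_one, smul_sub] using spectrum.notMem_iff.mp hI

/-- **Kerzman–Stein identity.** If `S` is the orthogonal projection of a
complex Hilbert space `H` onto a closed subspace `M`, and `C` is a bounded (not
necessarily orthogonal) projection of `H` with range `M`, then with `A = C* - C` one has
`S ∘ (I - A) = C`; consequently `I - A` is invertible with bounded inverse and
`S = C ∘ (I - A)⁻¹`. -/
theorem statement3 {H : Type*} [NormedAddCommGroup H] [InnerProductSpace ℂ H]
    [CompleteSpace H] (M : Submodule ℂ H) [CompleteSpace M]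
    (C : H →L[ℂ] H) (hidem : C.comp C = C) (hrange : LinearMap.range (C : H →ₗ[ℂ] H) = M) :
    (M.subtypeL.comp (M.orthogonalProjectionOnto)).comp
        (1 - (ContinuousLinearMap.adjoint C - C)) = C ∧
      ∃ B : H →L[ℂ] H,
        (1 - (ContinuousLinearMap.adjoint C - C)).comp B = 1 ∧
        B.comp (1 - (ContinuousLinearMap.adjoint C - C)) = 1 ∧
        M.subtypeL.comp (M.orthogonalProjectionOnto) = C.comp B := by
  have hrange_eq : C.range = M.starProjection.range := by
    rw [Submodule.range_starProjection, ← hrange]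
  have hSC : M.starProjection * C = C :=
    ContinuousLinearMap.IsIdempotentElem.mul_eq_right_of_range_le
      M.isIdempotentElem_starProjection hrange_eq.le
  have hCS : C * M.starProjection = M.starProjection :=
    ContinuousLinearMap.IsIdempotentElem.mul_eq_right_of_range_le hidem hrange_eq.ge
  have key := (isSelfAdjoint_starProjection M).mul_one_sub_star_sub_self hSC hCS
  have hunit : IsUnit (1 - (ContinuousLinearMap.adjoint C - C)) :=
    isUnit_one_sub_of_mem_skewAdjoint <| by
      simp [skewAdjoint.mem_iff, ContinuousLinearMap.star_eq_adjoint]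
  refine ⟨key, ↑hunit.unit⁻¹, hunit.mul_val_inv, hunit.val_inv_mul, ?_⟩
  exact (Units.eq_mul_inv_iff_mul_eq _).mpr key
end

section
/- (Modified Kerzman–Stein identity.) Let H be a complex Hilbert space, M ⊆ H a closed subspace, S the orthogonal projection of H onto M, and C : H → H a bounded linear operator with C ∘ C = C and range(C) = M. Suppose B, A : H → H are bounded linear operators with C* − C = B + A and ‖A‖ < 1. Then S ∘ (I − A) = C + S ∘ B; consequently I − A is invertible with bounded inverse and S = (C + S ∘ B) ∘ (I − A)⁻¹. -/
open ContinuousLinearMap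

theorem ContinuousLinearMap.IsIdempotentElem.comp_eq_right_of_range_le {R M : Type*} [Ring R]
    [TopologicalSpace M] [AddCommGroup M] [Module R M] {q p : M →L[R] M}
    (hq : IsIdempotentElem q) (h : p.range ≤ q.range) : q ∘L p = p :=
  coe_inj.1 <| (LinearMap.IsIdempotentElem.comp_eq_right_iff hq.toLinearMap _).2 h

section KerzmanStein

variable {𝕜 E : Type*} [RCLike 𝕜] [NormedAddCommGroup E] [InnerProductSpace 𝕜 E]
  [CompleteSpace E] (U : Submodule 𝕜 E) [U.HasOrthogonalProjection] {C : E →L[𝕜] E}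

/-- The adjoint of `C ∘L U.starProjection = U.starProjection`, which holds as both operators
are idempotents with range `U`. -/
theorem Submodule.starProjection_comp_adjoint_eq_self (hC : IsIdempotentElem C)
    (hrange : LinearMap.range (C : E →ₗ[𝕜] E) = U) :
    U.starProjection ∘L adjoint C = U.starProjection := by
  have hCS : C ∘L U.starProjection = U.starProjection :=
    hC.comp_eq_right_of_range_le (by rw [range_starProjection]; exact hrange.ge)
  simpa only [adjoint_comp, (isSelfAdjoint_starProjection U).adjoint_eq]
    using congrArg adjoint hCS

theorem Submodule.starProjection_comp_adjoint_sub_self (hC : IsIdempotentElem C)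
    (hrange : LinearMap.range (C : E →ₗ[𝕜] E) = U) :
    U.starProjection ∘L (adjoint C - C) = U.starProjection - C := by
  have hSC : U.starProjection ∘L C = C :=
    (U.isIdempotentElem_starProjection).comp_eq_right_of_range_le
      (by rw [range_starProjection]; exact hrange.le)
  rw [comp_sub, U.starProjection_comp_adjoint_eq_self hC hrange, hSC]

theorem Submodule.starProjection_mul_one_sub_eq (hC : IsIdempotentElem C)
    (hrange : LinearMap.range (C : E →ₗ[𝕜] E) = U) {A B : E →L[𝕜] E}
    (hsplit : adjoint C - C = B + A) :
    U.starProjection * (1 - A) = C + U.starProjection * B := by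
  have hS_add : U.starProjection * B + U.starProjection * A = U.starProjection - C := by
    rw [← mul_add, ← hsplit]
    exact U.starProjection_comp_adjoint_sub_self hC hrange
  rw [mul_sub, mul_one]
  linear_combination (norm := abel) -hS_add

end KerzmanStein

/-- **Modified Kerzman–Stein identity.** If `S` is the orthogonal projection
of a complex Hilbert space `H` onto a closed subspace `M`, `C` is a bounded projection of
`H` with range `M`, and `C* - C = B + A` with `‖A‖ < 1`, then `S ∘ (I - A) = C + S ∘ B`;
consequently `I - A` is invertible with bounded inverse and
`S = (C + S ∘ B) ∘ (I - A)⁻¹`. -/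
theorem statement4 {H : Type*} [NormedAddCommGroup H] [InnerProductSpace ℂ H]
    [CompleteSpace H] (M : Submodule ℂ H) [CompleteSpace M]
    (C : H →L[ℂ] H) (hidem : C.comp C = C) (hrange : LinearMap.range (C : H →ₗ[ℂ] H) = M)
    (B A : H →L[ℂ] H) (hsplit : ContinuousLinearMap.adjoint C - C = B + A)
    (hA : ‖A‖ < 1) :
    (M.subtypeL.comp M.orthogonalProjectionOnto).comp (1 - A)
        = C + (M.subtypeL.comp M.orthogonalProjectionOnto).comp B ∧
      ∃ A' : H →L[ℂ] H,
        (1 - A).comp A' = 1 ∧ A'.comp (1 - A) = 1 ∧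
        M.subtypeL.comp M.orthogonalProjectionOnto
          = (C + (M.subtypeL.comp M.orthogonalProjectionOnto).comp B).comp A' := by
  change M.starProjection * (1 - A) = C + M.starProjection * B ∧
    ∃ A' : H →L[ℂ] H, (1 - A) * A' = 1 ∧ A' * (1 - A) = 1 ∧
      M.starProjection = (C + M.starProjection * B) * A'
  have hKerzmanStein := M.starProjection_mul_one_sub_eq hidem hrange hsplit
  let u : (H →L[ℂ] H)ˣ := Units.oneSub A hA
  refine ⟨hKerzmanStein, ↑u⁻¹, u.mul_inv, u.inv_mul, ?_⟩
  rw [← hKerzmanStein, mul_assoc, show (1 - A) * ↑u⁻¹ = 1 from u.mul_inv, mul_one]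
end

section
/- Let D ⊂ ℂⁿ be a bounded open set with defining function ρ : ℂⁿ → ℝ of class C², D = {ρ < 0} and ∇ρ(w) ≠ 0 for every w ∈ bD. If D is strongly ℂ-linearly convex, i.e. there is c > 0 such that |⟨∂ρ(w), w − z⟩| ≥ c |w − z|² for all w ∈ bD and all z in the closure of D, then D is strongly pseudoconvex: for every w ∈ bD and every v ∈ ℂⁿ with v ≠ 0 and ⟨∂ρ(w), v⟩ = 0, the Levi form satisfies L_ρ(w; v) > 0. -/
open MeasureTheory Complex

noncomputable section

instance (n : ℕ) : MeasurableSpace (EuclideanSpace ℂ (Fin n)) := borel _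
instance (n : ℕ) : BorelSpace (EuclideanSpace ℂ (Fin n)) := ⟨rfl⟩

/-- The Wirtinger derivative ∂ρ/∂w_j. -/
def wd {n : ℕ} (ρ : EuclideanSpace ℂ (Fin n) → ℝ) (w : EuclideanSpace ℂ (Fin n)) (j : Fin n) : ℂ :=
  (1 / 2 : ℂ) * ((fderiv ℝ ρ w (EuclideanSpace.single j 1) : ℂ)
    - Complex.I * (fderiv ℝ ρ w (EuclideanSpace.single j Complex.I) : ℂ))

/-- ⟨∂ρ(w), u⟩ = ∑ ∂ρ/∂w_j (w) u_j. -/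
def wpair {n : ℕ} (ρ : EuclideanSpace ℂ (Fin n) → ℝ) (w u : EuclideanSpace ℂ (Fin n)) : ℂ :=
  ∑ j, wd ρ w j * u j

/-- Iterated real directional derivative ∂_b ∂_a ρ (w). -/
def d2 {n : ℕ} (ρ : EuclideanSpace ℂ (Fin n) → ℝ) (w a b : EuclideanSpace ℂ (Fin n)) : ℝ :=
  fderiv ℝ (fun x => fderiv ℝ ρ x a) w b

/-- The coefficient ∂²ρ/∂w_j∂w̄_k (w) of the Levi form. -/
def leviCoef {n : ℕ} (ρ : EuclideanSpace ℂ (Fin n) → ℝ) (w : EuclideanSpace ℂ (Fin n))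
    (j k : Fin n) : ℂ :=
  (1 / 4 : ℂ) *
    (((d2 ρ w (EuclideanSpace.single j 1) (EuclideanSpace.single k 1)
        + d2 ρ w (EuclideanSpace.single j Complex.I) (EuclideanSpace.single k Complex.I) : ℝ) : ℂ)
      + Complex.I *
        ((d2 ρ w (EuclideanSpace.single j 1) (EuclideanSpace.single k Complex.I)
          - d2 ρ w (EuclideanSpace.single j Complex.I) (EuclideanSpace.single k 1) : ℝ) : ℂ))

/-- The Levi form L_ρ(w; v). -/
def levi {n : ℕ} (ρ : EuclideanSpace ℂ (Fin n) → ℝ) (w v : EuclideanSpace ℂ (Fin n)) : ℝ :=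
  ∑ j, ∑ k, (leviCoef ρ w j k * v j * (starRingEnd ℂ) (v k)).re

/-! If `L_ρ(w; v) ≤ 0` for a complex tangent vector `v`, then, since `4 L_ρ(w; v)` is the sum of the
real Hessians of `ρ` in the directions `v` and `i v`, one of these tangent directions `u` has
`D²ρ(w)(u, u) ≤ 0`. Bending slightly inwards, the parabola `t ↦ w + t u + t² ε ν` with
`Dρ(w) ν < 0` then runs inside `D` for small `t > 0`. Along it `⟨∂ρ(w), w - z⟩ = -t² ε ⟨∂ρ(w), ν⟩`
while `|w - z| ≈ t |u|`, so strong ℂ-linear convexity forces `c |u|² ≤ ε |⟨∂ρ(w), ν⟩|` for every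
`ε > 0`, i.e. `u = 0`. -/

open Filter Topology Set

theorem eventually_lt_of_deriv_eq_zero_of_deriv_deriv_neg {g : ℝ → ℝ} {x₀ : ℝ}
    (hc : ContinuousAt g x₀) (hd : deriv g x₀ = 0) (hdd : deriv (deriv g) x₀ < 0) :
    ∀ᶠ x in 𝓝[>] x₀, g x < g x₀ := by
  have hneg : ∀ᶠ x in 𝓝[>] x₀, deriv g x < 0 :=
    deriv_neg_right_of_sign_deriv <| nhdsWithin_le_nhds <|
      eventually_nhdsWithin_sign_eq_of_deriv_neg hdd hd
  obtain ⟨δ, hδ, hδneg⟩ := mem_nhdsGT_iff_exists_Ioo_subset.mp hneg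
  have hcont : ContinuousOn g (Ico x₀ δ) := by
    rintro x ⟨hx₀, hxδ⟩
    rcases hx₀.eq_or_lt with rfl | hx
    · exact hc.continuousWithinAt
    · exact (differentiableAt_of_deriv_ne_zero (hδneg ⟨hx, hxδ⟩).ne).continuousAt
        |>.continuousWithinAt
  have hanti : StrictAntiOn g (Ico x₀ δ) :=
    strictAntiOn_of_deriv_neg (convex_Ico x₀ δ) hcont fun x hx =>
      hδneg (by rwa [interior_Ico] at hx)
  filter_upwards [Ioo_mem_nhdsGT hδ] with x hx
  exact hanti ⟨le_rfl, hδ⟩ ⟨hx.1.le, hx.2⟩ hx.1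

theorem ContinuousLinearMap.exists_apply_neg_of_ne_zero {E : Type*} [AddCommGroup E] [Module ℝ E]
    [TopologicalSpace E] {φ : E →L[ℝ] ℝ} (hφ : φ ≠ 0) : ∃ x, φ x < 0 := by
  obtain ⟨x, hx⟩ := DFunLike.ne_iff.mp hφ
  rcases (show φ x ≠ 0 from hx).lt_or_gt with h | h
  · exact ⟨x, h⟩
  · exact ⟨-x, by simpa using h⟩

section

variable {E F : Type*} [NormedAddCommGroup E] [NormedSpace ℝ E] [NormedAddCommGroup F]
  [NormedSpace ℝ F]

theorem eventually_lt_along_parabola {f : E → ℝ} {w u ν : E} (hf : Differentiable ℝ f)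
    (hf' : DifferentiableAt ℝ (fderiv ℝ f) w) (hu : fderiv ℝ f w u = 0)
    (h : fderiv ℝ (fderiv ℝ f) w u u + 2 * fderiv ℝ f w ν < 0) :
    ∀ᶠ t in 𝓝[>] (0 : ℝ), f (w + t • u + t ^ 2 • ν) < f w := by
  set γ : ℝ → E := fun t => w + t • u + t ^ 2 • ν
  have hγ0 : γ 0 = w := by simp [γ]
  have hγ : ∀ t, HasDerivAt γ (u + (2 * t) • ν) t := fun t => by
    simpa [γ, add_assoc] using (((hasDerivAt_id t).smul_const u).add
      ((hasDerivAt_pow 2 t).smul_const ν)).const_add w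
  have hg : deriv (f ∘ γ) = fun t => fderiv ℝ f (γ t) (u + (2 * t) • ν) :=
    funext fun t => ((hf _).hasFDerivAt.comp_hasDerivAt t (hγ t)).deriv
  have hgg : HasDerivAt (deriv (f ∘ γ))
      (fderiv ℝ (fderiv ℝ f) w u u + 2 * fderiv ℝ f w ν) 0 := by
    have hDf := (hγ0 ▸ hf'.hasFDerivAt).comp_hasDerivAt 0 (hγ 0)
    have hlin : HasDerivAt (fun t : ℝ => u + (2 * t) • ν) ((2 : ℝ) • ν) 0 := by
      simpa using (((hasDerivAt_id (0 : ℝ)).const_mul 2).smul_const ν).const_add u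
    rw [hg]
    exact (hDf.clm_apply hlin).congr_deriv (by simp [hγ0])
  have := eventually_lt_of_deriv_eq_zero_of_deriv_deriv_neg
    (hf.continuous.comp (by fun_prop : Continuous γ)).continuousAt
    (by simpa [hg, hγ0] using hu) (hgg.deriv ▸ h)
  simpa [hγ0] using this

theorem mul_sq_norm_le_of_eventually_along_parabola (ℓ : E →ₗ[ℝ] F) {u ν : E} {c : ℝ}
    (hu : ℓ u = 0)
    (h : ∀ᶠ t in 𝓝[>] (0 : ℝ), c * ‖t • u + t ^ 2 • ν‖ ^ 2 ≤ ‖ℓ (t • u + t ^ 2 • ν)‖) :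
    c * ‖u‖ ^ 2 ≤ ‖ℓ ν‖ := by
  have hlim : Tendsto (fun t : ℝ => c * ‖u + t • ν‖ ^ 2) (𝓝[>] 0) (𝓝 (c * ‖u‖ ^ 2)) := by
    exact tendsto_nhdsWithin_of_tendsto_nhds (Continuous.tendsto' (by fun_prop) 0 _ (by simp))
  refine le_of_tendsto hlim ?_
  filter_upwards [h, self_mem_nhdsWithin] with t ht (htpos : 0 < t)
  have hsplit : t • u + t ^ 2 • ν = t • (u + t • ν) := by rw [smul_add, smul_smul, sq]
  rw [hsplit, norm_smul, map_smul, map_add, hu, zero_add, map_smul, smul_smul, norm_smul,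
    Real.norm_of_nonneg htpos.le, Real.norm_of_nonneg (by positivity), mul_pow] at ht
  nlinarith [pow_pos htpos 2]

end

section

variable {n : ℕ}

theorem EuclideanSpace.sum_re_smul_single_add_im_smul_single (u : EuclideanSpace ℂ (Fin n)) :
    ∑ j, ((u j).re • EuclideanSpace.single j (1 : ℂ) + (u j).im • EuclideanSpace.single j I) =
      u := by
  ext k
  simp [WithLp.ofLp_sum, Finset.sum_apply, Complex.real_smul, Finset.sum_add_distrib,
    Pi.single_apply, Complex.re_add_im]

theorem bilinear_apply_eq_sum_re_im
    (B : EuclideanSpace ℂ (Fin n) →L[ℝ] EuclideanSpace ℂ (Fin n) →L[ℝ] ℝ)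
    (a b : EuclideanSpace ℂ (Fin n)) :
    B a b = ∑ j, ∑ k,
      ((a j).re * (b k).re * B (EuclideanSpace.single j 1) (EuclideanSpace.single k 1)
      + (a j).re * (b k).im * B (EuclideanSpace.single j 1) (EuclideanSpace.single k I)
      + (a j).im * (b k).re * B (EuclideanSpace.single j I) (EuclideanSpace.single k 1)
      + (a j).im * (b k).im * B (EuclideanSpace.single j I) (EuclideanSpace.single k I)) := by
  conv_lhs =>
    rw [← a.sum_re_smul_single_add_im_smul_single, ← b.sum_re_smul_single_add_im_smul_single]
  rw [map_sum B, sum_apply]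
  refine Finset.sum_congr rfl fun j _ => ?_
  rw [map_sum]
  refine Finset.sum_congr rfl fun k _ => ?_
  simp only [map_add, map_smul, add_apply, smul_apply, smul_eq_mul]
  ring

def wpairLinear (ρ : EuclideanSpace ℂ (Fin n) → ℝ) (w : EuclideanSpace ℂ (Fin n)) :
    EuclideanSpace ℂ (Fin n) →ₗ[ℂ] ℂ where
  toFun := wpair ρ w
  map_add' a b := by simp [wpair, mul_add, Finset.sum_add_distrib]
  map_smul' c a := by simp [wpair, Finset.mul_sum, mul_left_comm]

@[simp]
theorem wpairLinear_apply (ρ : EuclideanSpace ℂ (Fin n) → ℝ) (w u : EuclideanSpace ℂ (Fin n)) :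
    wpairLinear ρ w u = wpair ρ w u := rfl

theorem fderiv_apply_eq_two_mul_re_wpair (ρ : EuclideanSpace ℂ (Fin n) → ℝ)
    (w u : EuclideanSpace ℂ (Fin n)) : fderiv ℝ ρ w u = 2 * (wpair ρ w u).re := by
  conv_lhs => rw [← u.sum_re_smul_single_add_im_smul_single]
  simp only [map_sum, map_add, map_smul, smul_eq_mul, wpair, Complex.re_sum, Finset.mul_sum]
  refine Finset.sum_congr rfl fun j _ => ?_
  simp [wd, Complex.mul_re, Complex.mul_im]
  ring

theorem d2_eq_flip_fderiv_fderiv {ρ : EuclideanSpace ℂ (Fin n) → ℝ} {w : EuclideanSpace ℂ (Fin n)}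
    (hρ : DifferentiableAt ℝ (fderiv ℝ ρ) w) (a b : EuclideanSpace ℂ (Fin n)) :
    d2 ρ w a b = (fderiv ℝ (fderiv ℝ ρ) w).flip a b := by
  rw [d2, fderiv_clm_apply hρ (differentiableAt_const a)]
  simp

theorem fderiv_fderiv_self_add_I_smul_eq_four_mul_levi {ρ : EuclideanSpace ℂ (Fin n) → ℝ}
    {w : EuclideanSpace ℂ (Fin n)} (hρ : DifferentiableAt ℝ (fderiv ℝ ρ) w)
    (v : EuclideanSpace ℂ (Fin n)) :
    fderiv ℝ (fderiv ℝ ρ) w v v + fderiv ℝ (fderiv ℝ ρ) w (I • v) (I • v) = 4 * levi ρ w v := by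
  set B := (fderiv ℝ (fderiv ℝ ρ) w).flip
  change B v v + B (I • v) (I • v) = _
  rw [bilinear_apply_eq_sum_re_im B v v, bilinear_apply_eq_sum_re_im B, levi, Finset.mul_sum,
    ← Finset.sum_add_distrib]
  refine Finset.sum_congr rfl fun j _ => ?_
  rw [Finset.mul_sum, ← Finset.sum_add_distrib]
  refine Finset.sum_congr rfl fun k _ => ?_
  simp only [leviCoef, d2_eq_flip_fderiv_fderiv hρ, B, ContinuousLinearMap.flip_apply]
  simp only [PiLp.smul_apply, smul_eq_mul, Complex.mul_re, Complex.mul_im, Complex.add_re,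
    Complex.add_im, Complex.ofReal_re, Complex.ofReal_im, Complex.I_re, Complex.I_im,
    Complex.conj_re, Complex.conj_im]
  norm_num
  ring

theorem exists_tangent_fderiv_fderiv_nonpos_of_levi_nonpos {ρ : EuclideanSpace ℂ (Fin n) → ℝ}
    {w v : EuclideanSpace ℂ (Fin n)} (hρ : DifferentiableAt ℝ (fderiv ℝ ρ) w) (hv : v ≠ 0)
    (hvt : wpair ρ w v = 0) (hL : levi ρ w v ≤ 0) :
    ∃ u, u ≠ 0 ∧ wpair ρ w u = 0 ∧ fderiv ℝ (fderiv ℝ ρ) w u u ≤ 0 := by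
  have hsum := fderiv_fderiv_self_add_I_smul_eq_four_mul_levi hρ v
  rcases le_or_gt (fderiv ℝ (fderiv ℝ ρ) w v v) 0 with h | h
  · exact ⟨v, hv, hvt, h⟩
  · refine ⟨I • v, smul_ne_zero I_ne_zero hv, ?_, by linarith⟩
    rw [← wpairLinear_apply, map_smul, wpairLinear_apply, hvt, smul_zero]

theorem mul_sq_norm_nonpos_of_fderiv_fderiv_nonpos {ρ : EuclideanSpace ℂ (Fin n) → ℝ}
    {w u ν : EuclideanSpace ℂ (Fin n)} {c : ℝ} (hρ : Differentiable ℝ ρ)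
    (hρ' : DifferentiableAt ℝ (fderiv ℝ ρ) w) (hw : ρ w ≤ 0)
    (hconv : ∀ z, ρ z < 0 → c * ‖w - z‖ ^ 2 ≤ ‖wpair ρ w (w - z)‖)
    (hu : wpair ρ w u = 0) (huu : fderiv ℝ (fderiv ℝ ρ) w u u ≤ 0) (hν : fderiv ℝ ρ w ν < 0) :
    c * ‖u‖ ^ 2 ≤ 0 := by
  have hut : fderiv ℝ ρ w u = 0 := by simp [fderiv_apply_eq_two_mul_re_wpair, hu]
  have hbound : ∀ ε > 0, c * ‖u‖ ^ 2 ≤ ε * ‖wpair ρ w ν‖ := by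
    intro ε hε
    have hinside := eventually_lt_along_parabola (ν := ε • ν) hρ hρ' hut
      (by rw [map_smul, smul_eq_mul]; nlinarith)
    have := mul_sq_norm_le_of_eventually_along_parabola ((wpairLinear ρ w).restrictScalars ℝ)
      (ν := ε • ν) hu <| hinside.mono fun t ht => by
        have h := hconv _ (ht.trans_le hw)
        rwa [show w - (w + t • u + t ^ 2 • ε • ν) = -(t • u + t ^ 2 • ε • ν) by abel, norm_neg,
          ← wpairLinear_apply, map_neg, norm_neg] at h
    simpa [norm_smul, abs_of_pos hε] using this
  have hlim : Tendsto (fun ε : ℝ => ε * ‖wpair ρ w ν‖) (𝓝[>] 0) (𝓝 0) := by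
    simpa using ((continuous_mul_const ‖wpair ρ w ν‖).tendsto 0).mono_left nhdsWithin_le_nhds
  exact ge_of_tendsto hlim (eventually_nhdsWithin_of_forall hbound)

end

theorem statement7_general (n : ℕ) (D : Set (EuclideanSpace ℂ (Fin n)))
    (ρ : EuclideanSpace ℂ (Fin n) → ℝ) (hρ : ContDiff ℝ 2 ρ)
    (hdef : D = {z | ρ z < 0})
    (hgrad : ∀ w ∈ frontier D, fderiv ℝ ρ w ≠ 0)
    (hconv : ∃ c : ℝ, 0 < c ∧ ∀ w ∈ frontier D, ∀ z ∈ closure D,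
      c * ‖w - z‖ ^ 2 ≤ ‖wpair ρ w (w - z)‖) :
    ∀ w ∈ frontier D, ∀ v : EuclideanSpace ℂ (Fin n),
      v ≠ 0 → wpair ρ w v = 0 → 0 < levi ρ w v := by
  obtain ⟨c, hc, hconv⟩ := hconv
  intro w hw v hv hvt
  by_contra! hL
  have hρ1 : Differentiable ℝ ρ := hρ.differentiable two_ne_zero
  have hρ2 : DifferentiableAt ℝ (fderiv ℝ ρ) w :=
    ((hρ.fderiv_right (m := 1) le_rfl).differentiable one_ne_zero) w
  obtain ⟨u, hu, hwu, huu⟩ := exists_tangent_fderiv_fderiv_nonpos_of_levi_nonpos hρ2 hv hvt hL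
  obtain ⟨ν, hν⟩ := ContinuousLinearMap.exists_apply_neg_of_ne_zero (hgrad w hw)
  have hρw : ρ w ≤ 0 :=
    closure_lt_subset_le hρ.continuous continuous_const (hdef ▸ frontier_subset_closure hw)
  have hcu := mul_sq_norm_nonpos_of_fderiv_fderiv_nonpos hρ1 hρ2 hρw
    (fun z hz => hconv w hw z (subset_closure (hdef ▸ hz))) hwu huu hν
  exact hu (by simpa using (nonpos_of_mul_nonpos_right hcu hc).antisymm (sq_nonneg _))

/-- A bounded domain of class `C²` that is strongly ℂ-linearly convex is
strongly pseudoconvex. -/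
theorem statement7 (n : ℕ) (D : Set (EuclideanSpace ℂ (Fin n)))
    (hDopen : IsOpen D) (hDbd : Bornology.IsBounded D)
    (ρ : EuclideanSpace ℂ (Fin n) → ℝ) (hρ : ContDiff ℝ 2 ρ)
    (hdef : D = {z | ρ z < 0})
    (hgrad : ∀ w ∈ frontier D, fderiv ℝ ρ w ≠ 0)
    (hconv : ∃ c : ℝ, 0 < c ∧ ∀ w ∈ frontier D, ∀ z ∈ closure D,
      c * ‖w - z‖ ^ 2 ≤ ‖wpair ρ w (w - z)‖) :
    ∀ w ∈ frontier D, ∀ v : EuclideanSpace ℂ (Fin n),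
      v ≠ 0 → wpair ρ w v = 0 → 0 < levi ρ w v :=
  statement7_general n D ρ hρ hdef hgrad hconv

end
end

section
/- Let ρ(z) = (Re z₁)² + (Im z₁)⁴ + |z₂|² − 1 on ℂ² and D_{2,4} = {z ∈ ℂ² : ρ(z) < 0}. Then: (a) ρ is of class C^∞ and ∇ρ(w) ≠ 0 for every w ∈ bD_{2,4}; (b) D_{2,4} is strictly convex: for any two distinct points z, w in the closure of D_{2,4}, the open segment joining z and w is contained in D_{2,4}; (c) D_{2,4} is strongly pseudoconvex: L_ρ(w; v) > 0 for every w ∈ bD_{2,4} and every v ∈ ℂ², v ≠ 0; (d) D_{2,4} is NOT strongly ℂ-linearly convex: there is no constant c > 0 such that |⟨∂ρ(w), w − z⟩| ≥ c |w − z|² for all w, z ∈ bD_{2,4}. -/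
open MeasureTheory Complex

noncomputable section

/-- The defining function of the real ellipsoid `D_{2,4}`. -/
def rho24 (z : EuclideanSpace ℂ (Fin 2)) : ℝ :=
  (z 0).re ^ 2 + (z 0).im ^ 4 + ‖z 1‖ ^ 2 - 1

/-- The real ellipsoid `D_{2,4}`. -/
def D24 : Set (EuclideanSpace ℂ (Fin 2)) := {z | rho24 z < 0}


/-! ### Auxiliary machinery -/

abbrev E2' := EuclideanSpace ℂ (Fin 2)

def Xc : E2' →L[ℝ] ℝ := Complex.reCLM.comp ((EuclideanSpace.proj (0 : Fin 2)).restrictScalars ℝ)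
def Yc : E2' →L[ℝ] ℝ := Complex.imCLM.comp ((EuclideanSpace.proj (0 : Fin 2)).restrictScalars ℝ)
def Uc : E2' →L[ℝ] ℝ := Complex.reCLM.comp ((EuclideanSpace.proj (1 : Fin 2)).restrictScalars ℝ)
def Vc : E2' →L[ℝ] ℝ := Complex.imCLM.comp ((EuclideanSpace.proj (1 : Fin 2)).restrictScalars ℝ)

@[simp] lemma Xc_apply (z : E2') : Xc z = (z 0).re := rfl
@[simp] lemma Yc_apply (z : E2') : Yc z = (z 0).im := rfl
@[simp] lemma Uc_apply (z : E2') : Uc z = (z 1).re := rfl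
@[simp] lemma Vc_apply (z : E2') : Vc z = (z 1).im := rfl

lemma rho_eq (z : E2') : rho24 z = Xc z ^ 2 + Yc z ^ 4 + Uc z ^ 2 + Vc z ^ 2 - 1 := by
  simp [rho24, Complex.sq_norm, Complex.normSq_apply]; ring

def Dr (w : E2') : E2' →L[ℝ] ℝ :=
  (2*Xc w) • Xc + (4*Yc w^3) • Yc + (2*Uc w) • Uc + (2*Vc w) • Vc

lemma hasFDeriv_rho (w : E2') : HasFDerivAt rho24 (Dr w) w := by
  have hX := Xc.hasFDerivAt (x := w)
  have hY := Yc.hasFDerivAt (x := w)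
  have hU := Uc.hasFDerivAt (x := w)
  have hV := Vc.hasFDerivAt (x := w)
  have h := ((((hX.mul hX).add (((hY.mul hY).mul hY).mul hY)).add (hU.mul hU)).add
    (hV.mul hV)).sub_const 1
  refine (h.congr_fderiv ?_).congr_of_eventuallyEq (Filter.Eventually.of_forall fun z => ?_)
  · ext v
    simp only [Dr, ContinuousLinearMap.add_apply, ContinuousLinearMap.smul_apply, smul_eq_mul,
      Pi.mul_apply]
    ring
  · rw [rho_eq]; simp only [Pi.add_apply, Pi.mul_apply]; ring

lemma fderiv_rho (w : E2') : fderiv ℝ rho24 w = Dr w := (hasFDeriv_rho w).fderiv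

def Dr2 (w a : E2') : E2' →L[ℝ] ℝ :=
  (2*Xc a) • Xc + (12*Yc w^2*Yc a) • Yc + (2*Uc a) • Uc + (2*Vc a) • Vc

lemma hasFDeriv2_rho (w a : E2') :
    HasFDerivAt (fun x => fderiv ℝ rho24 x a) (Dr2 w a) w := by
  have : (fun x => fderiv ℝ rho24 x a) = fun x =>
      (2*Xc a)*Xc x + (4*Yc a)*(Yc x*Yc x*Yc x) + (2*Uc a)*Uc x + (2*Vc a)*Vc x := by
    funext x
    rw [fderiv_rho]
    simp only [Dr, ContinuousLinearMap.add_apply, ContinuousLinearMap.smul_apply, smul_eq_mul]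
    ring
  rw [this]
  have hX := Xc.hasFDerivAt (x := w)
  have hY := Yc.hasFDerivAt (x := w)
  have hU := Uc.hasFDerivAt (x := w)
  have hV := Vc.hasFDerivAt (x := w)
  have h := (((hX.const_mul (2*Xc a)).add ((((hY.mul hY).mul hY)).const_mul (4*Yc a))).add
    (hU.const_mul (2*Uc a))).add (hV.const_mul (2*Vc a))
  refine h.congr_fderiv ?_
  ext v
  simp only [Dr2, ContinuousLinearMap.add_apply, ContinuousLinearMap.smul_apply, smul_eq_mul,
    Pi.mul_apply]
  ring

lemma d2_rho (w a b : E2') : d2 rho24 w a b =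
    2*Xc a*Xc b + 12*Yc w^2*Yc a*Yc b + 2*Uc a*Uc b + 2*Vc a*Vc b := by
  have : d2 rho24 w a b = Dr2 w a b := by
    rw [d2, (hasFDeriv2_rho w a).fderiv]
  rw [this]
  simp only [Dr2, ContinuousLinearMap.add_apply, ContinuousLinearMap.smul_apply, smul_eq_mul]

lemma contDiff_rho : ContDiff ℝ (⊤ : ℕ∞) rho24 := by
  have : rho24 = fun z => Xc z ^ 2 + Yc z ^ 4 + Uc z ^ 2 + Vc z ^ 2 - 1 := funext rho_eq
  rw [this]
  exact ((((Xc.contDiff.pow 2).add (Yc.contDiff.pow 4)).add (Uc.contDiff.pow 2)).add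
    (Vc.contDiff.pow 2)).sub contDiff_const

@[simp] lemma s01_0 : (EuclideanSpace.single (0:Fin 2) (1:ℂ)) 0 = 1 := by simp
@[simp] lemma s01_1 : (EuclideanSpace.single (0:Fin 2) (1:ℂ)) 1 = 0 := by simp
@[simp] lemma s0I_0 : (EuclideanSpace.single (0:Fin 2) Complex.I) 0 = Complex.I := by simp
@[simp] lemma s0I_1 : (EuclideanSpace.single (0:Fin 2) Complex.I) 1 = 0 := by simp
@[simp] lemma s11_0 : (EuclideanSpace.single (1:Fin 2) (1:ℂ)) 0 = 0 := by simp
@[simp] lemma s11_1 : (EuclideanSpace.single (1:Fin 2) (1:ℂ)) 1 = 1 := by simp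
@[simp] lemma s1I_0 : (EuclideanSpace.single (1:Fin 2) Complex.I) 0 = 0 := by simp
@[simp] lemma s1I_1 : (EuclideanSpace.single (1:Fin 2) Complex.I) 1 = Complex.I := by simp

lemma isOpen_D24 : IsOpen D24 := isOpen_lt contDiff_rho.continuous continuous_const

lemma closure_D24_subset : closure D24 ⊆ {z | rho24 z ≤ 0} :=
  closure_minimal (fun z hz => le_of_lt (show rho24 z < 0 from hz))
    (isClosed_le contDiff_rho.continuous continuous_const)

lemma mem_frontier_D24 (w : E2') : w ∈ frontier D24 ↔ rho24 w = 0 := by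
  rw [isOpen_D24.frontier_eq]
  constructor
  · rintro ⟨h1, h2⟩
    have h3 := closure_D24_subset h1
    simp only [Set.mem_setOf_eq] at h3
    simp only [D24, Set.mem_setOf_eq, not_lt] at h2
    linarith
  · intro h0
    have hsum : Xc w^2 + Yc w^4 + Uc w^2 + Vc w^2 = 1 := by
      have := rho_eq w; rw [h0] at this; linarith
    constructor
    · have h : Filter.Tendsto (fun t : ℝ => t • w) (nhds 1) (nhds ((1:ℝ) • w)) :=
          (continuous_id.smul continuous_const).tendsto 1
      rw [one_smul] at h
      refine mem_closure_of_tendsto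
        (h.mono_left (nhdsWithin_le_nhds (s := Set.Iio (1:ℝ)))) ?_
      filter_upwards [Ioo_mem_nhdsLT_of_mem (Set.mem_Ioc.mpr ⟨zero_lt_one, le_refl 1⟩)]
        with t ht
      have ht0 := ht.1
      have ht1 := ht.2
      show rho24 (t • w) < 0
      rw [rho_eq]
      simp only [_root_.map_smul, smul_eq_mul]
      have h2 : t^2 < 1 := by nlinarith
      have h4 : t^4 ≤ t^2 := by nlinarith
      nlinarith [sq_nonneg (Xc w), sq_nonneg (Uc w), sq_nonneg (Vc w), sq_nonneg (Yc w ^ 2),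
        sq_nonneg (Yc w), mul_pos ht0 ht0]
    · intro hD
      simp only [D24, Set.mem_setOf_eq, h0] at hD
      exact lt_irrefl 0 hD

lemma sqc (a b u v : ℝ) (ha : 0 < a) (hb : 0 < b) (hab : a + b = 1) :
    (a*u+b*v)^2 ≤ a*u^2+b*v^2 := by nlinarith [mul_pos ha hb, sq_nonneg (u-v)]

lemma sqcs (a b u v : ℝ) (ha : 0 < a) (hb : 0 < b) (hab : a + b = 1) (huv : u ≠ v) :
    (a*u+b*v)^2 < a*u^2+b*v^2 := by
  have h : (0:ℝ) < (u-v)^2 :=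
    lt_of_le_of_ne (sq_nonneg _) (Ne.symm (pow_ne_zero 2 (sub_ne_zero.mpr huv)))
  nlinarith [mul_pos (mul_pos ha hb) h]

lemma p4c (a b u v : ℝ) (ha : 0 < a) (hb : 0 < b) (hab : a + b = 1) :
    (a*u+b*v)^4 ≤ a*u^4+b*v^4 := by
  have h1 := sqc a b u v ha hb hab
  have h2 := sqc a b (u^2) (v^2) ha hb hab
  nlinarith [sq_nonneg (a*u+b*v), h1, h2]

lemma p4cs (a b u v : ℝ) (ha : 0 < a) (hb : 0 < b) (hab : a + b = 1) (huv : u ≠ v) :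
    (a*u+b*v)^4 < a*u^4+b*v^4 := by
  have h1 := sqcs a b u v ha hb hab huv
  have h2 := sqc a b (u^2) (v^2) ha hb hab
  nlinarith [sq_nonneg (a*u+b*v), h1, h2]

lemma wd0_eq (w : E2') : wd rho24 w 0 = ((Xc w : ℝ) : ℂ) - 2*Complex.I*((Yc w : ℝ) : ℂ)^3 := by
  rw [wd]
  simp only [fderiv_rho]
  simp only [Dr, ContinuousLinearMap.add_apply, ContinuousLinearMap.smul_apply, smul_eq_mul]
  simp
  push_cast
  ring

lemma wd1_eq (w : E2') : wd rho24 w 1 = ((Uc w : ℝ) : ℂ) - Complex.I*((Vc w : ℝ) : ℂ) := by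
  rw [wd]
  simp only [fderiv_rho]
  simp only [Dr, ContinuousLinearMap.add_apply, ContinuousLinearMap.smul_apply, smul_eq_mul]
  simp
  push_cast
  ring

lemma lc00 (w : E2') : leviCoef rho24 w 0 0 = ((1/2 + 3*Yc w^2 : ℝ) : ℂ) := by
  rw [leviCoef]
  simp only [d2_rho]
  simp
  push_cast
  ring

lemma lc11 (w : E2') : leviCoef rho24 w 1 1 = 1 := by
  rw [leviCoef]
  simp only [d2_rho]
  simp
  norm_num

lemma lc01 (w : E2') : leviCoef rho24 w 0 1 = 0 := by
  rw [leviCoef]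
  simp only [d2_rho]
  simp

lemma lc10 (w : E2') : leviCoef rho24 w 1 0 = 0 := by
  rw [leviCoef]
  simp only [d2_rho]
  simp

lemma levi_eq (w v : E2') :
    levi rho24 w v = (1/2 + 3*Yc w^2) * Complex.normSq (v 0) + Complex.normSq (v 1) := by
  rw [levi]
  simp only [Fin.sum_univ_two, lc00, lc01, lc10, lc11]
  simp only [mul_assoc, Complex.mul_conj, zero_mul, Complex.zero_re, one_mul,
    ← Complex.ofReal_mul, Complex.ofReal_re]
  ring

set_option maxHeartbeats 1000000 in
/-- The ellipsoid `D_{2,4}` is smooth with nonvanishing gradient on its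
boundary, strictly convex, strongly pseudoconvex, but not strongly ℂ-linearly convex. -/
theorem statement8 :
    (ContDiff ℝ (⊤ : ℕ∞) rho24 ∧ ∀ w ∈ frontier D24, fderiv ℝ rho24 w ≠ 0) ∧
    (∀ z ∈ closure D24, ∀ w ∈ closure D24, z ≠ w → openSegment ℝ z w ⊆ D24) ∧
    (∀ w ∈ frontier D24, ∀ v : EuclideanSpace ℂ (Fin 2), v ≠ 0 → 0 < levi rho24 w v) ∧
    ¬ ∃ c : ℝ, 0 < c ∧ ∀ w ∈ frontier D24, ∀ z ∈ frontier D24,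
        c * ‖w - z‖ ^ 2 ≤ ‖wpair rho24 w (w - z)‖ := by
  refine ⟨⟨contDiff_rho, ?_⟩, ?_, ?_, ?_⟩
  · -- (a) nonvanishing gradient
    intro w hw h
    rw [mem_frontier_D24] at hw
    rw [fderiv_rho] at h
    have e1 : Dr w (EuclideanSpace.single 0 1) = 0 := by rw [h]; rfl
    have e2 : Dr w (EuclideanSpace.single 0 Complex.I) = 0 := by rw [h]; rfl
    have e3 : Dr w (EuclideanSpace.single 1 1) = 0 := by rw [h]; rfl
    have e4 : Dr w (EuclideanSpace.single 1 Complex.I) = 0 := by rw [h]; rfl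
    simp only [Dr, ContinuousLinearMap.add_apply, ContinuousLinearMap.smul_apply,
      smul_eq_mul, Xc_apply, Yc_apply, Uc_apply, Vc_apply, s01_0, s01_1, s0I_0, s0I_1,
      s11_0, s11_1, s1I_0, s1I_1] at e1 e2 e3 e4
    norm_num at e1 e2 e3 e4
    rw [rho_eq] at hw
    simp only [Xc_apply, Yc_apply, Uc_apply, Vc_apply, e1, e2, e3, e4] at hw
    norm_num at hw
  · -- (b) strict convexity
    intro z hz w hw hne p hp
    obtain ⟨a, b, ha, hb, hab, rfl⟩ := hp
    have hz' : Xc z^2 + Yc z^4 + Uc z^2 + Vc z^2 ≤ 1 := by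
      have h := closure_D24_subset hz
      rw [Set.mem_setOf_eq, rho_eq] at h
      linarith
    have hw' : Xc w^2 + Yc w^4 + Uc w^2 + Vc w^2 ≤ 1 := by
      have h := closure_D24_subset hw
      rw [Set.mem_setOf_eq, rho_eq] at h
      linarith
    show rho24 (a • z + b • w) < 0
    rw [rho_eq]
    simp only [map_add, _root_.map_smul, smul_eq_mul]
    have hX := sqc a b (Xc z) (Xc w) ha hb hab
    have hY := p4c a b (Yc z) (Yc w) ha hb hab
    have hU := sqc a b (Uc z) (Uc w) ha hb hab
    have hV := sqc a b (Vc z) (Vc w) ha hb hab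
    have hza := mul_le_mul_of_nonneg_left hz' ha.le
    have hwa := mul_le_mul_of_nonneg_left hw' hb.le
    obtain ⟨j, hj⟩ : ∃ j, z j ≠ w j := by
      by_contra hc
      push_neg at hc
      exact hne (PiLp.ext hc)
    fin_cases j
    · have : (z 0).re ≠ (w 0).re ∨ (z 0).im ≠ (w 0).im := by
        by_contra hc
        push_neg at hc
        exact hj (Complex.ext hc.1 hc.2)
      rcases this with h | h
      · have hs := sqcs a b (Xc z) (Xc w) ha hb hab (by simpa using h)
        nlinarith
      · have hs := p4cs a b (Yc z) (Yc w) ha hb hab (by simpa using h)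
        nlinarith
    · have : (z 1).re ≠ (w 1).re ∨ (z 1).im ≠ (w 1).im := by
        by_contra hc
        push_neg at hc
        exact hj (Complex.ext hc.1 hc.2)
      rcases this with h | h
      · have hs := sqcs a b (Uc z) (Uc w) ha hb hab (by simpa using h)
        nlinarith
      · have hs := sqcs a b (Vc z) (Vc w) ha hb hab (by simpa using h)
        nlinarith
  · -- (c) strong pseudoconvexity
    intro w _ v hv
    rw [levi_eq]
    have hex : v 0 ≠ 0 ∨ v 1 ≠ 0 := by
      by_contra hc
      push_neg at hc
      exact hv (PiLp.ext fun j => by fin_cases j <;> [exact hc.1; exact hc.2])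
    have h0 : (0:ℝ) < 1/2 + 3*Yc w^2 := by positivity
    rcases hex with hj | hj
    · have hp := Complex.normSq_pos.mpr hj
      nlinarith [Complex.normSq_nonneg (v 1), mul_pos h0 hp]
    · have hp := Complex.normSq_pos.mpr hj
      nlinarith [mul_nonneg h0.le (Complex.normSq_nonneg (v 0))]
  · -- (d) not strongly ℂ-linearly convex
    rintro ⟨c, hc, H⟩
    have hm0 : 0 < min c 1 := lt_min hc one_pos
    have hm1 : min c 1 ≤ 1 := min_le_right _ _
    have hmc : min c 1 ≤ c := min_le_left _ _
    set m := min c 1 with hm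
    set y := Real.sqrt (m/2) with hy
    have hy2 : y^2 = m/2 := Real.sq_sqrt (by positivity)
    have hy4 : y^4 = (m/2)^2 := by
      have : y^4 = (y^2)^2 := by ring
      rw [this, hy2]
    have hy41 : y^4 ≤ 1/4 := by rw [hy4]; nlinarith
    have h1y4 : (0:ℝ) ≤ 1 - y^4 := by linarith
    set s := Real.sqrt (1 - y^4) with hs
    have hs2 : s^2 = 1 - y^4 := Real.sq_sqrt h1y4
    have hs1 : s ≤ 1 := Real.sqrt_le_one.mpr (by linarith [hy4, sq_nonneg (m/2)])
    have hs_lb : 1 - y^4 ≤ s := by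
      rw [hs]
      calc 1 - y^4 = Real.sqrt ((1-y^4)^2) := (Real.sqrt_sq h1y4).symm
        _ ≤ Real.sqrt (1-y^4) := Real.sqrt_le_sqrt (by nlinarith)
    set W : EuclideanSpace ℂ (Fin 2) := EuclideanSpace.single 1 1 with hW
    set Z : EuclideanSpace ℂ (Fin 2) :=
      EuclideanSpace.single 0 ((y:ℂ)*Complex.I) + EuclideanSpace.single 1 ((s:ℂ)) with hZ
    have hW0 : W 0 = 0 := by rw [hW]; simp
    have hW1 : W 1 = 1 := by rw [hW]; simp
    have hZ0 : Z 0 = (y:ℂ)*Complex.I := by rw [hZ]; simp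
    have hZ1 : Z 1 = (s:ℂ) := by rw [hZ]; simp
    have hWf : W ∈ frontier D24 := by
      rw [mem_frontier_D24, rho_eq]
      simp only [Xc_apply, Yc_apply, Uc_apply, Vc_apply, hW0, hW1]
      norm_num
    have hZf : Z ∈ frontier D24 := by
      rw [mem_frontier_D24, rho_eq]
      simp only [Xc_apply, Yc_apply, Uc_apply, Vc_apply, hZ0, hZ1]
      simp only [Complex.mul_re, Complex.mul_im, Complex.ofReal_re, Complex.ofReal_im,
        Complex.I_re, Complex.I_im]
      norm_num
      linarith [hs2]
    have hwd0 : wd rho24 W 0 = 0 := by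
      rw [wd0_eq]
      simp only [Xc_apply, Yc_apply, hW0]
      norm_num
    have hwd1 : wd rho24 W 1 = 1 := by
      rw [wd1_eq]
      simp only [Uc_apply, Vc_apply, hW1]
      norm_num
    have hsub0 : (W - Z) 0 = -((y:ℂ)*Complex.I) := by
      have : (W - Z) 0 = W 0 - Z 0 := rfl
      rw [this, hW0, hZ0]; ring
    have hsub1 : (W - Z) 1 = ((1 - s : ℝ):ℂ) := by
      have : (W - Z) 1 = W 1 - Z 1 := rfl
      rw [this, hW1, hZ1]; push_cast; ring
    have hpair : wpair rho24 W (W - Z) = ((1 - s : ℝ):ℂ) := by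
      rw [wpair, Fin.sum_univ_two, hwd0, hwd1, hsub1]
      ring
    have habs : ‖wpair rho24 W (W - Z)‖ = 1 - s := by
      rw [hpair, Complex.norm_real, Real.norm_of_nonneg (by linarith : (0:ℝ) ≤ 1 - s)]
    have hnorm : y^2 ≤ ‖W - Z‖^2 := by
      have hsn : (0:ℝ) ≤ ∑ i, ‖(W - Z) i‖^2 := Finset.sum_nonneg fun i _ => sq_nonneg _
      have hn : ‖W - Z‖^2 = ‖(W - Z) 0‖^2 + ‖(W - Z) 1‖^2 := by
        rw [EuclideanSpace.norm_eq, Real.sq_sqrt hsn, Fin.sum_univ_two]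
      rw [hn, hsub0]
      have h1 : ‖-((y:ℂ)*Complex.I)‖^2 = y^2 := by
        rw [norm_neg]
        simp
      rw [h1]
      nlinarith [sq_nonneg ‖(W - Z) 1‖]
    have hkey := H W hWf Z hZf
    rw [habs] at hkey
    have h2 : c * y^2 ≤ 1 - s :=
      le_trans (mul_le_mul_of_nonneg_left hnorm hc.le) hkey
    have h3 : 1 - s ≤ y^4 := by linarith
    nlinarith [mul_pos hc hm0, hy2, hy4, h2, h3]

end
end

section
/- Let n ≥ 2, let D ⊂ ℂⁿ be a bounded open set with defining function ρ : ℂⁿ → ℝ continuously differentiable, D = {ρ < 0}, and suppose ⟨∂ρ(w), w − z⟩ ≠ 0 for every w ∈ bD and every z ∈ D. Then for every f ∈ L¹(bD, Σ), the function F(z) = (2πi)^{−n} ∫_{bD} f(w) ⟨∂ρ(w), w − z⟩^{−n} dΣ(w) is well defined and holomorphic on D (i.e. F is complex-differentiable on D as a function of n complex variables). -/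
open MeasureTheory Complex

noncomputable section

/-- Induced Lebesgue measure on bD : (2n-1)-Hausdorff measure restricted to the frontier. -/
def bM {n : ℕ} (D : Set (EuclideanSpace ℂ (Fin n))) : Measure (EuclideanSpace ℂ (Fin n)) :=
  (μH[(2 * n - 1 : ℝ)]).restrict (frontier D)

/-- The interior Cauchy–Leray integral of `f`, computed with respect to the induced
Lebesgue measure `Σ = bM D`. -/
def cauchyLeray {n : ℕ} (D : Set (EuclideanSpace ℂ (Fin n)))
    (ρ : EuclideanSpace ℂ (Fin n) → ℝ) (f : EuclideanSpace ℂ (Fin n) → ℂ)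
    (z : EuclideanSpace ℂ (Fin n)) : ℂ :=
  (1 / (2 * (Real.pi : ℂ) * Complex.I) ^ n) *
    ∫ w, f w / (wpair ρ w (w - z)) ^ n ∂(bM D)

/-! The kernel `⟨∂ρ(w), w − z⟩` is continuous in `(w, z)` and nonvanishing on `bD × D`, so by
compactness it is bounded below by some `δ > 0` on `bD × B` for every closed ball `B ⊆ D`.
Hence the `z`-derivative `n f(w) ⟨∂ρ(w), w − z⟩^(-n-1) ∂ρ(w)` of the integrand is dominated on `B`
by a constant multiple of `|f|`, and differentiation under the integral sign applies. -/

theorem hasDerivAt_const_div_pow {𝕜 : Type*} [NontriviallyNormedField 𝕜] (c : 𝕜) {u : 𝕜}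
    (hu : u ≠ 0) (n : ℕ) :
    HasDerivAt (fun v => c / v ^ n) (-(n * c / u ^ (n + 1))) u := by
  have hfun : (fun v : 𝕜 => c / v ^ n) = fun v => c * v ^ (-n : ℤ) := by
    ext v; rw [zpow_neg, zpow_natCast, div_eq_mul_inv]
  rw [hfun]
  refine ((hasDerivAt_zpow (-n : ℤ) u (Or.inl hu)).const_mul c).congr_deriv ?_
  rw [show (-(n : ℤ) - 1) = -((n + 1 : ℕ) : ℤ) by push_cast; ring, zpow_neg, zpow_natCast]
  push_cast
  ring

section LerayKernel

variable {E : Type*} [NormedAddCommGroup E] [NormedSpace ℂ E] {L : E → E →L[ℂ] ℂ} {K : Set E}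

theorem hasFDerivAt_const_div_pow_sub (c : ℂ) (ℓ : E →L[ℂ] ℂ) {w z : E} (h : ℓ (w - z) ≠ 0)
    (n : ℕ) :
    HasFDerivAt (fun z => c / ℓ (w - z) ^ n) ((n * c / ℓ (w - z) ^ (n + 1)) • ℓ) z := by
  have hℓ : HasFDerivAt (fun z => ℓ (w - z)) (-ℓ) z := by
    simpa only [map_sub] using ℓ.hasFDerivAt.const_sub (ℓ w)
  have := (hasDerivAt_const_div_pow c h n).comp_hasFDerivAt z hℓ
  rwa [smul_neg, neg_smul, neg_neg] at this

theorem exists_pos_le_norm_apply_sub (hK : IsCompact K) (hL : Continuous L) {S : Set E}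
    (hS : IsCompact S) (hne : ∀ w ∈ K, ∀ z ∈ S, L w (w - z) ≠ 0) :
    ∃ δ > 0, ∀ w ∈ K, ∀ z ∈ S, δ ≤ ‖L w (w - z)‖ := by
  have hcont : Continuous fun p : E × E => ‖L p.1 (p.1 - p.2)‖ :=
    ((hL.comp continuous_fst).clm_apply (continuous_fst.sub continuous_snd)).norm
  obtain ⟨δ, hδ, hle⟩ := (hK.prod hS).exists_forall_le' hcont.continuousOn
    fun p hp => norm_pos_iff.2 (hne p.1 hp.1 p.2 hp.2)
  exact ⟨δ, hδ, fun w hw z hz => hle (w, z) ⟨hw, hz⟩⟩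

variable [MeasurableSpace E] [OpensMeasurableSpace E] {μ : Measure E} {f : E → ℂ}

theorem aestronglyMeasurable_div_pow_apply_sub (hf : AEStronglyMeasurable f μ)
    (hL : Continuous L) (z : E) (n : ℕ) :
    AEStronglyMeasurable (fun w => f w / L w (w - z) ^ n) μ := by
  have hk : Measurable fun w => L w (w - z) :=
    (hL.clm_apply (continuous_id.sub continuous_const)).measurable
  simp_rw [div_eq_mul_inv]
  exact hf.mul (hk.pow_const n).inv.aestronglyMeasurable

theorem integrable_div_pow_apply_sub (hK : IsCompact K) (hμK : ∀ᵐ w ∂μ, w ∈ K)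
    (hL : Continuous L) (hf : Integrable f μ) {z : E} (hz : ∀ w ∈ K, L w (w - z) ≠ 0) (n : ℕ) :
    Integrable (fun w => f w / L w (w - z) ^ n) μ := by
  obtain ⟨δ, hδ, hle⟩ := exists_pos_le_norm_apply_sub hK hL isCompact_singleton
    fun w hw z' hz' => (Set.mem_singleton_iff.1 hz') ▸ hz w hw
  refine (hf.norm.div_const (δ ^ n)).mono'
    (aestronglyMeasurable_div_pow_apply_sub hf.1 hL z n) ?_
  filter_upwards [hμK] with w hw
  rw [norm_div, norm_pow]
  gcongr
  exact hle w hw z rfl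

theorem differentiableOn_integral_div_pow_apply_sub [ProperSpace E]
    (hK : IsCompact K) (hμK : ∀ᵐ w ∂μ, w ∈ K) (hL : Continuous L) (hf : Integrable f μ)
    {U : Set E} (hU : IsOpen U) (hne : ∀ w ∈ K, ∀ z ∈ U, L w (w - z) ≠ 0) (n : ℕ) :
    DifferentiableOn ℂ (fun z => ∫ w, f w / L w (w - z) ^ n ∂μ) U := by
  intro z₀ hz₀
  obtain ⟨ε, hε, hεU⟩ := Metric.nhds_basis_closedBall.mem_iff.1 (hU.mem_nhds hz₀)
  obtain ⟨δ, hδ, hle⟩ := exists_pos_le_norm_apply_sub hK hL (isCompact_closedBall z₀ ε)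
    fun w hw z hz => hne w hw z (hεU hz)
  obtain ⟨M, hM⟩ := hK.exists_bound_of_continuousOn hL.continuousOn
  have hmeas_deriv : AEStronglyMeasurable (fun w => (n * f w / L w (w - z₀) ^ (n + 1)) • L w) μ :=
    (aestronglyMeasurable_div_pow_apply_sub (hf.1.const_mul _) hL z₀ (n + 1)).smul
      hL.aestronglyMeasurable
  have hbound : ∀ᵐ w ∂μ, ∀ z ∈ Metric.ball z₀ ε,
      ‖(n * f w / L w (w - z) ^ (n + 1)) • L w‖ ≤ n * ‖f w‖ / δ ^ (n + 1) * M := by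
    filter_upwards [hμK] with w hw z hz
    rw [norm_smul, norm_div, norm_mul, norm_pow, Complex.norm_natCast]
    gcongr
    · exact hle w hw z (Metric.ball_subset_closedBall hz)
    · exact hM w hw
  have hderiv : ∀ᵐ w ∂μ, ∀ z ∈ Metric.ball z₀ ε, HasFDerivAt (fun z => f w / L w (w - z) ^ n)
      ((n * f w / L w (w - z) ^ (n + 1)) • L w) z := by
    filter_upwards [hμK] with w hw z hz
    exact hasFDerivAt_const_div_pow_sub (f w) (L w)
      (hne w hw z (hεU (Metric.ball_subset_closedBall hz))) n
  exact (hasFDerivAt_integral_of_dominated_of_fderiv_le (Metric.ball_mem_nhds z₀ hε)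
    (Filter.Eventually.of_forall fun z => aestronglyMeasurable_div_pow_apply_sub hf.1 hL z n)
    (integrable_div_pow_apply_sub hK hμK hL hf (hne · · z₀ hz₀) n) hmeas_deriv hbound
    (((hf.norm.const_mul n).div_const _).mul_const M)
    hderiv).differentiableAt.differentiableWithinAt

end LerayKernel

section Wirtinger

variable {n : ℕ}

def wpairCLM (ρ : EuclideanSpace ℂ (Fin n) → ℝ) (w : EuclideanSpace ℂ (Fin n)) :
    EuclideanSpace ℂ (Fin n) →L[ℂ] ℂ :=
  ∑ j, wd ρ w j • EuclideanSpace.proj j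

variable {ρ : EuclideanSpace ℂ (Fin n) → ℝ}

theorem wpairCLM_apply (w u : EuclideanSpace ℂ (Fin n)) : wpairCLM ρ w u = wpair ρ w u := by
  simp [wpairCLM, wpair]

theorem continuous_wd (hρ : Continuous (fderiv ℝ ρ)) (j : Fin n) :
    Continuous fun w => wd ρ w j := by
  have happly : ∀ v, Continuous fun w => ((fderiv ℝ ρ w v : ℝ) : ℂ) := fun v =>
    continuous_ofReal.comp ((ContinuousLinearMap.apply ℝ ℝ v).continuous.comp hρ)
  exact continuous_const.mul ((happly _).sub (continuous_const.mul (happly _)))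

theorem continuous_wpairCLM (hρ : Continuous (fderiv ℝ ρ)) : Continuous (wpairCLM ρ) :=
  continuous_finsetSum _ fun j _ => (continuous_wd hρ j).smul continuous_const

end Wirtinger

theorem statement17_general (n : ℕ) (D : Set (EuclideanSpace ℂ (Fin n)))
    (hDopen : IsOpen D) (hDbd : Bornology.IsBounded D)
    (ρ : EuclideanSpace ℂ (Fin n) → ℝ) (hρ : ContDiff ℝ 1 ρ)
    (hker : ∀ w ∈ frontier D, ∀ z ∈ D, wpair ρ w (w - z) ≠ 0) :
    ∀ f : EuclideanSpace ℂ (Fin n) → ℂ, Integrable f (bM D) →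
      (∀ z ∈ D, Integrable (fun w => f w / (wpair ρ w (w - z)) ^ n) (bM D)) ∧
        DifferentiableOn ℂ (cauchyLeray D ρ f) D := by
  intro f hf
  have hK : IsCompact (frontier D) :=
    hDbd.isCompact_closure.of_isClosed_subset isClosed_frontier frontier_subset_closure
  have hμK : ∀ᵐ w ∂bM D, w ∈ frontier D := ae_restrict_mem isClosed_frontier.measurableSet
  have hL := continuous_wpairCLM (hρ.continuous_fderiv one_ne_zero)
  simp only [← wpairCLM_apply] at hker ⊢
  refine ⟨fun z hz => integrable_div_pow_apply_sub hK hμK hL hf (hker · · z hz) n, ?_⟩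
  have hCL : cauchyLeray D ρ f = fun z => (1 / (2 * (Real.pi : ℂ) * I) ^ n) *
      ∫ w, f w / wpairCLM ρ w (w - z) ^ n ∂bM D := by
    ext z; simp only [cauchyLeray, wpairCLM_apply]
  rw [hCL]
  exact (differentiableOn_integral_div_pow_apply_sub hK hμK hL hf hDopen hker n).const_mul _

/-- If `D ⊂ ℂⁿ` is a bounded domain with `C¹` defining function `ρ` and
`⟨∂ρ(w), w − z⟩ ≠ 0` for all `w ∈ bD`, `z ∈ D`, then for every `f ∈ L¹(bD, Σ)` the
interior Cauchy–Leray integral of `f` is well defined (the integral converges absolutely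
for each `z ∈ D`) and holomorphic on `D`. -/
theorem statement17 (n : ℕ) (hn : 2 ≤ n) (D : Set (EuclideanSpace ℂ (Fin n)))
    (hDopen : IsOpen D) (hDbd : Bornology.IsBounded D)
    (ρ : EuclideanSpace ℂ (Fin n) → ℝ) (hρ : ContDiff ℝ 1 ρ)
    (hdef : D = {z | ρ z < 0})
    (hker : ∀ w ∈ frontier D, ∀ z ∈ D, wpair ρ w (w - z) ≠ 0) :
    ∀ f : EuclideanSpace ℂ (Fin n) → ℂ, Integrable f (bM D) →
      (∀ z ∈ D, Integrable (fun w => f w / (wpair ρ w (w - z)) ^ n) (bM D)) ∧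
        DifferentiableOn ℂ (cauchyLeray D ρ f) D :=
  statement17_general n D hDopen hDbd ρ hρ hker
end
end
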